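/- arXiv:1910.06384 — 4 statements merged into one kernel-verified Lean document; each statement's English description precedes it below -/
import Mathlib

section
/- For n ≥ 3, the cost function on an n-element set defined by c(∅)=0, c(S)=1 if 1 ≤ |S| ≤ 2, and c(S)=3 if |S| ≥ 3, is 2-average decreasing (for all nonempty S ⊆ T, 2·c(S)/|S| ≥ c(T)/|T|) but is not subadditive. -/
/-!
On nonempty sets the cost depends only on the size, through `f k = 1` for `k ≤ 2` and `f k = 3`
otherwise. For sizes `s ≤ t` on the same side of the threshold `f t = f s`, so the average can only
drop; across the threshold `f t / t = 3 / t ≤ 1 ≤ 2 / s = 2 * f s / s`. Subadditivity fails on two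
overlapping pairs `{a, b}` and `{b, d}`, whose union costs `3 > 1 + 1`.
-/

open Finset

noncomputable def thresholdCost (k : ℕ) : ℝ := if k ≤ 2 then 1 else 3

lemma thresholdCost_div_le_two_mul {s t : ℕ} (hs : 1 ≤ s) (hst : s ≤ t) :
    thresholdCost t / t ≤ 2 * (thresholdCost s / s) := by
  have hs' : (1 : ℝ) ≤ s := by exact_mod_cast hs
  have hst' : (s : ℝ) ≤ t := by exact_mod_cast hst
  rw [div_le_iff₀ (by linarith), mul_div_assoc', div_mul_eq_mul_div, le_div_iff₀ (by linarith)]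
  unfold thresholdCost
  split_ifs with ht hs2 hs2
  · linarith
  · omega
  · have ht' : (3 : ℝ) ≤ t := by exact_mod_cast (by omega : 3 ≤ t)
    have hs2' : (s : ℝ) ≤ 2 := by exact_mod_cast hs2
    linarith
  · linarith

section ThresholdCost

variable {α : Type*} {c : Finset α → ℝ}

lemma cost_eq_thresholdCost (h12 : ∀ S : Finset α, 1 ≤ #S → #S ≤ 2 → c S = 1)
    (h3 : ∀ S : Finset α, 3 ≤ #S → c S = 3) {S : Finset α} (hS : S.Nonempty) :
    c S = thresholdCost #S := by
  unfold thresholdCost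
  split_ifs with h
  · exact h12 S (one_le_card.mpr hS) h
  · exact h3 S (by omega)

lemma not_subadditive_of_two_lt_card [Fintype α] [DecidableEq α] (hα : 2 < Fintype.card α)
    (h12 : ∀ S : Finset α, 1 ≤ #S → #S ≤ 2 → c S = 1)
    (h3 : ∀ S : Finset α, 3 ≤ #S → c S = 3) :
    ¬ ∀ S T : Finset α, c (S ∪ T) ≤ c S + c T := by
  obtain ⟨a, b, d, hab, had, hbd⟩ := Fintype.two_lt_card_iff.mp hα
  intro hsub
  have hunion : ({a, b} ∪ {b, d} : Finset α) = {a, b, d} := by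
    ext x
    simp only [mem_union, mem_insert, mem_singleton]
    tauto
  have key := hsub {a, b} {b, d}
  rw [hunion, h3 _ (by rw [card_eq_three.mpr ⟨a, b, d, hab, had, hbd, rfl⟩]),
    h12 _ (by simp) card_le_two, h12 _ (by simp) card_le_two] at key
  norm_num at key

end ThresholdCost

theorem two_avg_decreasing_not_subadditive_general (n : ℕ) (hn : 3 ≤ n) (c : Finset (Fin n) → ℝ)
    (h12 : ∀ S : Finset (Fin n), 1 ≤ S.card → S.card ≤ 2 → c S = 1)
    (h3 : ∀ S : Finset (Fin n), 3 ≤ S.card → c S = 3) :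
    (∀ S T : Finset (Fin n), S ⊆ T → S.Nonempty → c T / T.card ≤ 2 * (c S / S.card)) ∧
    ¬ (∀ S T : Finset (Fin n), c (S ∪ T) ≤ c S + c T) := by
  refine ⟨fun S T hST hS => ?_, not_subadditive_of_two_lt_card (by rw [Fintype.card_fin]; omega) h12 h3⟩
  rw [cost_eq_thresholdCost h12 h3 hS, cost_eq_thresholdCost h12 h3 (hS.mono hST)]
  exact thresholdCost_div_le_two_mul (one_le_card.mpr hS) (card_le_card hST)

/-- The threshold cost function is 2-average decreasing but not subadditive. -/
theorem two_avg_decreasing_not_subadditive (n : ℕ) (hn : 3 ≤ n) (c : Finset (Fin n) → ℝ)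
    (h0 : c ∅ = 0)
    (h12 : ∀ S : Finset (Fin n), 1 ≤ S.card → S.card ≤ 2 → c S = 1)
    (h3 : ∀ S : Finset (Fin n), 3 ≤ S.card → c S = 3) :
    (∀ S T : Finset (Fin n), S ⊆ T → S.Nonempty → c T / T.card ≤ 2 * (c S / S.card)) ∧
    ¬ (∀ S T : Finset (Fin n), c (S ∪ T) ≤ c S + c T) :=
  two_avg_decreasing_not_subadditive_general n hn c h12 h3
end

section
/- If c : 2^N → ℝ≥0 is non-decreasing and α-average min-bounded, then for every nonempty T ⊆ N, the sum of standalone costs Σ_{i ∈ T} c({i}) is at most α·H_{|T|}·c(T), where H_k = 1 + 1/2 + ... + 1/k is the k-th harmonic number. -/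
/-- For non-decreasing α-average min-bounded c, the sum of standalone costs over T
is at most α·H_{|T|}·c(T). -/
theorem sum_standalone_le_harmonic {α : Type*} [DecidableEq α] (c : Finset α → ℝ) (a : ℝ)
    (ha : 1 ≤ a)
    (hmono : ∀ S T : Finset α, S ⊆ T → c S ≤ c T)
    (hmin : ∀ T : Finset α, (h : T.Nonempty) →
      T.inf' h (fun j => c {j}) ≤ a * (c T / T.card)) :
    ∀ T : Finset α, T.Nonempty →
      (∑ i ∈ T, c {i}) ≤ a * (∑ i ∈ Finset.range T.card, (1:ℝ) / (i + 1)) * c T := by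
  intro T
  induction T using Finset.strongInductionOn with
  | _ T ih =>
  intro hT
  obtain ⟨j, hj, hjmin⟩ := T.exists_min_image (fun j => c {j}) hT
  have hcj : c {j} ≤ a * (c T / T.card) :=
    le_trans (Finset.le_inf' hT _ (fun i hi => hjmin i hi)) (hmin T hT)
  set S := T.erase j with hS
  have hcard : T.card = S.card + 1 := by
    have h1 := Finset.card_pos.mpr hT; rw [hS, Finset.card_erase_of_mem hj]; omega
  have ha0 : (0:ℝ) ≤ a := le_trans zero_le_one ha
  have hH0 : (0:ℝ) ≤ ∑ i ∈ Finset.range S.card, (1:ℝ) / (i + 1) := by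
    apply Finset.sum_nonneg; intro i _; positivity
  have hSsum : (∑ i ∈ S, c {i}) ≤ a * (∑ i ∈ Finset.range S.card, (1:ℝ) / (i + 1)) * c T := by
    rcases S.eq_empty_or_nonempty with hSe | hSne
    · simp [hSe]
    · calc (∑ i ∈ S, c {i}) ≤ a * (∑ i ∈ Finset.range S.card, (1:ℝ) / (i + 1)) * c S :=
            ih S (Finset.erase_ssubset hj) hSne
        _ ≤ a * (∑ i ∈ Finset.range S.card, (1:ℝ) / (i + 1)) * c T := by
            apply mul_le_mul_of_nonneg_left (hmono S T (Finset.erase_subset _ _))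
            positivity
  have hsplit : (∑ i ∈ T, c {i}) = c {j} + ∑ i ∈ S, c {i} :=
    (Finset.add_sum_erase T _ hj).symm
  have hHsucc : (∑ i ∈ Finset.range T.card, (1:ℝ) / (i + 1))
      = (∑ i ∈ Finset.range S.card, (1:ℝ) / (i + 1)) + 1 / (S.card + 1) := by
    rw [hcard, Finset.sum_range_succ]
  have hcardR : (T.card : ℝ) = (S.card : ℝ) + 1 := by rw [hcard]; push_cast; ring
  rw [hsplit, hHsucc]
  have hcj' : c {j} ≤ a * (1 / ((S.card : ℝ) + 1)) * c T := by
    rw [hcardR] at hcj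
    calc c {j} ≤ a * (c T / ((S.card : ℝ) + 1)) := hcj
      _ = a * (1 / ((S.card : ℝ) + 1)) * c T := by ring
  calc c {j} + ∑ i ∈ S, c {i}
      ≤ a * (1 / ((S.card : ℝ) + 1)) * c T
        + a * (∑ i ∈ Finset.range S.card, (1:ℝ) / (i + 1)) * c T := add_le_add hcj' hSsum
    _ = a * ((∑ i ∈ Finset.range S.card, (1:ℝ) / (i + 1)) + 1 / ((S.card:ℝ) + 1)) * c T := by ring
end

section
/- For every constant α ≥ 1, there exists n and a cost function c : 2^{[n]} → ℝ≥0 that is neither α-average decreasing nor α-average min-bounded. Concretely, the function c(∅)=0, c(S) = max_{j ∈ S} √j (for nonempty S) has this property for n large enough: taking S = {2}, T = {2, n} witnesses failure of α-average decreasing when 2α < √n, and T = [n] witnesses failure of α-average min-bounded when α·√n/n < 1. -/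
/-! With `c S = max_{j ∈ S} √(j+1)` on `Fin (m+1)`, the pair `{0} ⊆ {0, m}` has averages `1` and
`√(m+1)/2`, and the whole ground set has average `1/√(m+1)` against a minimal singleton cost `1`.
Both inequalities therefore fail as soon as `2a < √(m+1)`. -/

open Finset

def IsAvgDecreasing {ι : Type*} (a : ℝ) (c : Finset ι → ℝ) : Prop :=
  ∀ S T : Finset ι, S ⊆ T → S.Nonempty → c T / T.card ≤ a * (c S / S.card)

def IsAvgMinBounded {ι : Type*} (a : ℝ) (c : Finset ι → ℝ) : Prop :=
  ∀ T : Finset ι, ∀ h : T.Nonempty, T.inf' h (fun j => c {j}) ≤ a * (c T / T.card)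

/-- The paper's `c(S) = max_{j ∈ S} √j` on `[n]`, with `Fin n` standing for `{1, …, n}`
via `j ↦ j + 1`. -/
noncomputable def sqrtCost (n : ℕ) (S : Finset (Fin n)) : ℝ :=
  if h : S.Nonempty then S.sup' h (fun j => √((j : ℕ) + 1)) else 0

lemma sqrtCost_singleton {n : ℕ} (j : Fin n) : sqrtCost n {j} = √((j : ℕ) + 1) := by
  simp [sqrtCost]

lemma one_le_sqrtCost_singleton {n : ℕ} (j : Fin n) : 1 ≤ sqrtCost n {j} := by
  rw [sqrtCost_singleton, Real.one_le_sqrt]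
  simp

lemma inf'_sqrtCost_singleton_of_zero_mem {m : ℕ} {T : Finset (Fin (m + 1))} (h0 : 0 ∈ T) :
    T.inf' ⟨0, h0⟩ (fun j => sqrtCost (m + 1) {j}) = 1 :=
  le_antisymm (by simpa [sqrtCost_singleton] using inf'_le (fun j => sqrtCost (m + 1) {j}) h0)
    (le_inf' _ _ fun j _ => one_le_sqrtCost_singleton j)

lemma sqrtCost_of_last_mem {m : ℕ} {S : Finset (Fin (m + 1))} (h : Fin.last m ∈ S) :
    sqrtCost (m + 1) S = √((m : ℝ) + 1) := by
  rw [sqrtCost, dif_pos ⟨_, h⟩]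
  refine le_antisymm (sup'_le _ _ fun j _ => ?_) ?_
  · gcongr
    exact_mod_cast Fin.le_last j
  · simpa using le_sup' (fun j : Fin (m + 1) => √((j : ℕ) + 1)) h

lemma not_isAvgDecreasing_sqrtCost {a : ℝ} {m : ℕ} (hm : 0 < m) (ha : 2 * a < √((m : ℝ) + 1)) :
    ¬ IsAvgDecreasing a (sqrtCost (m + 1)) := by
  intro H
  have hpair : ({0, Fin.last m} : Finset (Fin (m + 1))).card = 2 :=
    card_pair (Fin.ext_iff.not.2 (by simpa using hm.ne))
  have := H {0} {0, Fin.last m} (by simp) (singleton_nonempty 0)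
  rw [sqrtCost_of_last_mem (by simp), sqrtCost_singleton, hpair] at this
  norm_num at this
  linarith

lemma not_isAvgMinBounded_sqrtCost {a : ℝ} {m : ℕ} (ha : a < √((m : ℝ) + 1)) :
    ¬ IsAvgMinBounded a (sqrtCost (m + 1)) := by
  intro H
  have := H univ univ_nonempty
  rw [inf'_sqrtCost_singleton_of_zero_mem (mem_univ 0), sqrtCost_of_last_mem (mem_univ _),
    card_univ, Fintype.card_fin, Nat.cast_add_one, Real.sqrt_div_self, ← div_eq_mul_inv,
    one_le_div (Real.sqrt_pos.2 (by positivity))] at this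
  linarith

/-- For every α ≥ 1 there is a cost function (concretely c(S) = max_{j ∈ S} √j) that is
neither α-average decreasing nor α-average min-bounded. -/
theorem exists_neither_avg_decreasing_nor_min_bounded :
    ∀ a : ℝ, 1 ≤ a → ∃ (n : ℕ) (c : Finset (Fin n) → ℝ),
      (∀ S : Finset (Fin n),
        c S = if h : S.Nonempty then S.sup' h (fun j => Real.sqrt ((j : ℕ) + 1)) else 0) ∧
      ¬ (∀ S T : Finset (Fin n), S ⊆ T → S.Nonempty →
          c T / T.card ≤ a * (c S / S.card)) ∧
      ¬ (∀ T : Finset (Fin n), ∀ h : T.Nonempty,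
          T.inf' h (fun j => c {j}) ≤ a * (c T / T.card)) := by
  intro a ha
  obtain ⟨m, hm⟩ := exists_nat_gt ((2 * a) ^ 2)
  have hm0 : 0 < m := by exact_mod_cast (show (0 : ℝ) < m by nlinarith)
  have h2a : 2 * a < √((m : ℝ) + 1) := (Real.lt_sqrt (by positivity)).2 (by linarith)
  exact ⟨m + 1, sqrtCost (m + 1), fun _ => rfl, not_isAvgDecreasing_sqrtCost hm0 h2a,
    not_isAvgMinBounded_sqrtCost (by linarith)⟩
end

section
/- Let c : 2^N → ℝ≥0 be an α-average decreasing cost function, let τ be a trace with sets R^0 ⊃ R^1 ⊃ ... ⊃ R^ℓ as above, and define χ(R^k) = max_{0 ≤ m ≤ k} c(R^m)/(n−m). Then for every k, if T = R^k is nonempty, the total payment satisfies c(T) ≤ |T|·χ(T) ≤ α·c(T). -/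
/-- α-budget balance of the max-average cost sharing scheme along a trace:
c(T) ≤ |T|·χ(T) ≤ α·c(T) for T = R^k. -/
theorem cost_share_alpha_budget_balance {α : Type*} [Fintype α] [DecidableEq α]
    (c : Finset α → ℝ) (hnn : ∀ S, 0 ≤ c S)
    (a : ℝ) (ha : 1 ≤ a)
    (havg : ∀ S T : Finset α, S ⊆ T → S.Nonempty → c T / T.card ≤ a * (c S / S.card))
    (l : List α) (hl : l.Nodup) :
    ∀ k ≤ l.length, (Finset.univ \ (l.take k).toFinset : Finset α).Nonempty →
      c (Finset.univ \ (l.take k).toFinset) ≤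
        ((Finset.univ \ (l.take k).toFinset).card : ℝ) *
          (Finset.range (k + 1)).sup' Finset.nonempty_range_add_one
            (fun m => c (Finset.univ \ (l.take m).toFinset) / ((Fintype.card α : ℝ) - m)) ∧
      ((Finset.univ \ (l.take k).toFinset).card : ℝ) *
          (Finset.range (k + 1)).sup' Finset.nonempty_range_add_one
            (fun m => c (Finset.univ \ (l.take m).toFinset) / ((Fintype.card α : ℝ) - m))
        ≤ a * c (Finset.univ \ (l.take k).toFinset) := by
  intro k hk hne
  set R : ℕ → Finset α := fun m => Finset.univ \ (l.take m).toFinset with hR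
  have hlen : l.length ≤ Fintype.card α := List.Nodup.length_le_card hl
  have hcardt : ∀ m, m ≤ l.length → ((l.take m).toFinset).card = m := by
    intro m hm
    rw [List.toFinset_card_of_nodup (hl.sublist (List.take_sublist m l))]
    simpa using hm
  have hcard : ∀ m, m ≤ l.length → ((R m).card : ℝ) = (Fintype.card α : ℝ) - m := by
    intro m hm
    have : (R m).card = Fintype.card α - m := by
      rw [hR]
      simp only []
      rw [Finset.card_sdiff_of_subset (Finset.subset_univ _), Finset.card_univ, hcardt m hm]
    rw [this, Nat.cast_sub (le_trans hm hlen)]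
  have hsub : ∀ m, m ≤ k → R k ⊆ R m := by
    intro m hm
    apply Finset.sdiff_subset_sdiff (le_refl _)
    intro x hx
    rw [List.mem_toFinset] at hx ⊢
    have : l.take m = (l.take k).take m := by rw [List.take_take, min_eq_left hm]
    rw [this] at hx
    exact ((l.take k).take_prefix m).subset hx
  have hckcard : ((R k).card : ℝ) = (Fintype.card α : ℝ) - k := hcard k hk
  have hpos : (0 : ℝ) < (Fintype.card α : ℝ) - k := by
    rw [← hckcard]
    exact_mod_cast Finset.card_pos.mpr hne
  constructor
  · have hle : c (R k) / ((Fintype.card α : ℝ) - k) ≤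
        (Finset.range (k + 1)).sup' Finset.nonempty_range_add_one
          (fun m => c (R m) / ((Fintype.card α : ℝ) - m)) :=
      Finset.le_sup' (fun m => c (R m) / ((Fintype.card α : ℝ) - m)) (Finset.self_mem_range_succ k)
    calc c (R k) = ((Fintype.card α : ℝ) - k) * (c (R k) / ((Fintype.card α : ℝ) - k)) := by
          field_simp
      _ ≤ ((Fintype.card α : ℝ) - k) *
          ((Finset.range (k + 1)).sup' Finset.nonempty_range_add_one
            (fun m => c (R m) / ((Fintype.card α : ℝ) - m))) :=
          mul_le_mul_of_nonneg_left hle (le_of_lt hpos)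
      _ = ((R k).card : ℝ) * _ := by rw [hckcard]
  · have hbound : (Finset.range (k + 1)).sup' Finset.nonempty_range_add_one
        (fun m => c (R m) / ((Fintype.card α : ℝ) - m)) ≤
        a * (c (R k) / ((R k).card : ℝ)) := by
      apply Finset.sup'_le
      intro m hm
      rw [Finset.mem_range, Nat.lt_succ_iff] at hm
      have := havg (R k) (R m) (hsub m hm) hne
      rwa [hcard m (le_trans hm hk)] at this
    calc ((R k).card : ℝ) * _ ≤ ((R k).card : ℝ) * (a * (c (R k) / ((R k).card : ℝ))) :=
          mul_le_mul_of_nonneg_left hbound (Nat.cast_nonneg _)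
      _ = a * c (R k) := by
          rw [hckcard]; field_simp
end
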